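/- Let (S, 𝒮) be a measurable space, let κ and κ' be Markov kernels from S to S, let μ be a probability measure on S, and let ε ≥ 0 satisfy |κ(s, A) − κ'(s, A)| ≤ ε for every s ∈ S and every measurable set A. Let u : S → ℝ be measurable with |u(s)| ≤ 1 for all s, and let γ ∈ (0,1). Then for every positive integer T, |Σ_{t=1}^{T} γ^{t−1} ( ∫ u d(μ ∘ κ^{∘(t−1)}) − ∫ u d(μ ∘ κ'^{∘(t−1)}) )| ≤ 2ε/(1−γ)², where κ^{∘m} denotes the m-fold composition of the kernel with itself. -/

import Mathlib

/-! Transporting a set-wise bound through one step: `(κ ∘ₘ P) A - (κ' ∘ₘ Q) A` splits as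
`∫ κ(·, A) d(P - Q) + ∫ (κ - κ')(·, A) dQ`, and by the layer-cake formula a `[0, 1]`-valued
function integrates against `P - Q` to at most the set-wise distance of `P` and `Q`. So the laws
after `t` steps are within `t ε` on every set, the integrals of `u` (shifted into `[0, 2]`) within
`2 t ε`, and `∑ t γ ^ t ≤ γ / (1 - γ) ^ 2 ≤ 1 / (1 - γ) ^ 2`. -/

open MeasureTheory ProbabilityTheory

/-- The distribution of the state after `n` transitions of the Markov kernel `κ`,
starting from initial distribution `μ`. -/
noncomputable def iterKernel {S : Type*} [MeasurableSpace S]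
    (κ : Kernel S S) : ℕ → Measure S → Measure S
  | 0, μ => μ
  | n + 1, μ => (iterKernel κ n μ).bind (fun s => κ s)

open Set

section TotalVariation

variable {α : Type*} [MeasurableSpace α] {μ ν : Measure α} {ε : ℝ}

lemma integrableOn_measureReal_le_Ioc [IsFiniteMeasure μ] (f : α → ℝ) (M : ℝ) :
    IntegrableOn (fun t => μ.real {a | t ≤ f a}) (Ioc 0 M) := by
  have hanti : Antitone fun t => μ.real {a | t ≤ f a} :=
    fun t t' htt' => measureReal_mono fun a ha => htt'.trans ha
  refine .of_bound measure_Ioc_lt_top hanti.measurable.aestronglyMeasurable (μ.real univ)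
    (.of_forall fun t => ?_)
  rw [Real.norm_of_nonneg measureReal_nonneg]
  exact measureReal_mono (subset_univ _)

lemma abs_integral_sub_le_of_abs_measureReal_sub_le [IsFiniteMeasure μ] [IsFiniteMeasure ν]
    (h : ∀ A, MeasurableSet A → |μ.real A - ν.real A| ≤ ε) {f : α → ℝ} {M : ℝ}
    (hf : Measurable f) (hf0 : ∀ x, 0 ≤ f x) (hfM : ∀ x, f x ≤ M) (hM : 0 ≤ M) :
    |∫ x, f x ∂μ - ∫ x, f x ∂ν| ≤ M * ε := by
  have hint : ∀ (m : Measure α) [IsFiniteMeasure m], Integrable f m := fun m _ =>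
    .of_bound hf.aestronglyMeasurable M (.of_forall fun x => by
      rw [Real.norm_of_nonneg (hf0 x)]; exact hfM x)
  rw [(hint μ).integral_eq_integral_Ioc_meas_le (.of_forall hf0) (.of_forall hfM),
    (hint ν).integral_eq_integral_Ioc_meas_le (.of_forall hf0) (.of_forall hfM),
    ← integral_sub (integrableOn_measureReal_le_Ioc f M) (integrableOn_measureReal_le_Ioc f M),
    ← Real.norm_eq_abs]
  refine (norm_setIntegral_le_of_norm_le_const measure_Ioc_lt_top fun t _ =>
    h _ (measurableSet_le measurable_const hf)).trans_eq ?_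
  rw [Real.volume_real_Ioc_of_le hM, sub_zero, mul_comm]

lemma abs_integral_sub_le_two_mul_of_abs_le_one [IsProbabilityMeasure μ]
    [IsProbabilityMeasure ν] (h : ∀ A, MeasurableSet A → |μ.real A - ν.real A| ≤ ε)
    {f : α → ℝ} (hf : Measurable f) (hf1 : ∀ x, |f x| ≤ 1) :
    |∫ x, f x ∂μ - ∫ x, f x ∂ν| ≤ 2 * ε := by
  have hshift : ∀ (m : Measure α) [IsProbabilityMeasure m], ∫ x, (f x + 1) ∂m = ∫ x, f x ∂m + 1 :=
    fun m _ => by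
      rw [integral_add (.of_bound hf.aestronglyMeasurable 1 (.of_forall hf1)) (integrable_const 1)]
      simp
  have := abs_integral_sub_le_of_abs_measureReal_sub_le h (hf.add_const 1)
    (fun x => by linarith [(abs_le.1 (hf1 x)).1]) (fun x => by linarith [(abs_le.1 (hf1 x)).2])
    zero_le_two
  rwa [hshift, hshift, add_sub_add_right_eq_sub] at this

end TotalVariation

section KernelComp

variable {α β : Type*} [MeasurableSpace α] [MeasurableSpace β]

lemma measureReal_comp_apply (κ : Kernel α β) [IsFiniteKernel κ] (μ : Measure α)
    {A : Set β} (hA : MeasurableSet A) :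
    (κ ∘ₘ μ).real A = ∫ a, (κ a).real A ∂μ := by
  rw [measureReal_def, Measure.bind_apply hA κ.aemeasurable]
  exact (integral_toReal (κ.measurable_coe hA).aemeasurable
    (.of_forall fun a => measure_lt_top _ _)).symm

lemma abs_measureReal_comp_sub_le {μ ν : Measure α} [IsProbabilityMeasure μ]
    [IsProbabilityMeasure ν] {κ η : Kernel α β} [IsMarkovKernel κ] [IsMarkovKernel η]
    {δ ε : ℝ} (hμν : ∀ A, MeasurableSet A → |μ.real A - ν.real A| ≤ δ)
    (hκη : ∀ a A, MeasurableSet A → |(κ a).real A - (η a).real A| ≤ ε)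
    {A : Set β} (hA : MeasurableSet A) :
    |(κ ∘ₘ μ).real A - (η ∘ₘ ν).real A| ≤ δ + ε := by
  have hmeas : ∀ (ζ : Kernel α β), Measurable fun a => (ζ a).real A :=
    fun ζ => (ζ.measurable_coe hA).ennreal_toReal
  have hint : ∀ (ζ : Kernel α β) [IsMarkovKernel ζ], Integrable (fun a => (ζ a).real A) ν :=
    fun ζ _ => .of_bound (hmeas ζ).aestronglyMeasurable 1 (.of_forall fun a => by
      rw [Real.norm_of_nonneg measureReal_nonneg]; exact measureReal_le_one)
  have hmeasure : |∫ a, (κ a).real A ∂μ - ∫ a, (κ a).real A ∂ν| ≤ δ := by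
    simpa using abs_integral_sub_le_of_abs_measureReal_sub_le hμν (hmeas κ)
      (fun a => measureReal_nonneg) (fun a => measureReal_le_one) zero_le_one
  have hkernel : |∫ a, (κ a).real A ∂ν - ∫ a, (η a).real A ∂ν| ≤ ε := by
    rw [← integral_sub (hint κ) (hint η), ← Real.norm_eq_abs]
    simpa using norm_integral_le_of_norm_le_const (μ := ν)
      (f := fun a => (κ a).real A - (η a).real A) (.of_forall fun a => hκη a A hA)
  rw [measureReal_comp_apply κ μ hA, measureReal_comp_apply η ν hA]
  exact (abs_sub_le _ _ _).trans (add_le_add hmeasure hkernel)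

end KernelComp

section IterKernel

variable {S : Type*} [MeasurableSpace S] {κ κ' : Kernel S S} {μ : Measure S}

lemma iterKernel_succ (n : ℕ) :
    iterKernel κ (n + 1) μ = κ ∘ₘ iterKernel κ n μ := rfl

instance isProbabilityMeasure_iterKernel [IsMarkovKernel κ] [IsProbabilityMeasure μ] (n : ℕ) :
    IsProbabilityMeasure (iterKernel κ n μ) := by
  induction n with
  | zero => assumption
  | succ n _ => rw [iterKernel_succ]; infer_instance

lemma abs_measureReal_iterKernel_sub_le [IsMarkovKernel κ] [IsMarkovKernel κ']
    [IsProbabilityMeasure μ] {ε : ℝ}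
    (hclose : ∀ s A, MeasurableSet A → |(κ s).real A - (κ' s).real A| ≤ ε) (n : ℕ)
    {A : Set S} (hA : MeasurableSet A) :
    |(iterKernel κ n μ).real A - (iterKernel κ' n μ).real A| ≤ n * ε := by
  induction n generalizing A with
  | zero => simp [iterKernel]
  | succ n ih =>
    rw [iterKernel_succ, iterKernel_succ, Nat.cast_succ, add_one_mul]
    exact abs_measureReal_comp_sub_le (fun B hB => ih hB) hclose hA

end IterKernel

lemma sum_range_natCast_mul_geometric_le {γ : ℝ} (hγ0 : 0 ≤ γ) (hγ1 : γ < 1) (T : ℕ) :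
    ∑ t ∈ Finset.range T, (t : ℝ) * γ ^ t ≤ γ / (1 - γ) ^ 2 := by
  have hγ : ‖γ‖ < 1 := by rwa [Real.norm_of_nonneg hγ0]
  rw [← tsum_coe_mul_geometric_of_norm_lt_one hγ]
  exact (hasSum_coe_mul_geometric_of_norm_lt_one hγ).summable.sum_le_tsum _
    fun t _ => by positivity

theorem truncated_value_kernel_lipschitz_general
    {S : Type*} [MeasurableSpace S] (κ κ' : Kernel S S)
    [IsMarkovKernel κ] [IsMarkovKernel κ']
    (μ : Measure S) [IsProbabilityMeasure μ] (ε : ℝ) (hε : 0 ≤ ε)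
    (hclose : ∀ s : S, ∀ A : Set S, MeasurableSet A →
      |(κ s A).toReal - (κ' s A).toReal| ≤ ε)
    (u : S → ℝ) (humeas : Measurable u) (hubdd : ∀ s, |u s| ≤ 1)
    (γ : ℝ) (hγ : γ ∈ Set.Ioo (0 : ℝ) 1) (T : ℕ) :
    |∑ t ∈ Finset.range T, γ ^ t *
        ((∫ x, u x ∂(iterKernel κ t μ)) - ∫ x, u x ∂(iterKernel κ' t μ))|
      ≤ 2 * ε / (1 - γ) ^ 2 := by
  obtain ⟨hγ0, hγ1⟩ := hγ
  have hstep : ∀ t : ℕ, |(∫ x, u x ∂(iterKernel κ t μ)) - ∫ x, u x ∂(iterKernel κ' t μ)|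
      ≤ 2 * (t * ε) := fun t =>
    abs_integral_sub_le_two_mul_of_abs_le_one
      (fun A hA => abs_measureReal_iterKernel_sub_le hclose t hA) humeas hubdd
  calc _ ≤ ∑ t ∈ Finset.range T, γ ^ t * (2 * (t * ε)) := by
        refine (Finset.abs_sum_le_sum_abs _ _).trans (Finset.sum_le_sum fun t _ => ?_)
        rw [abs_mul, abs_of_pos (pow_pos hγ0 t)]
        exact mul_le_mul_of_nonneg_left (hstep t) (pow_nonneg hγ0.le t)
    _ = 2 * ε * ∑ t ∈ Finset.range T, (t : ℝ) * γ ^ t := by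
        rw [Finset.mul_sum]; congr 1 with t; ring
    _ ≤ 2 * ε * (γ / (1 - γ) ^ 2) := by
        gcongr; exact sum_range_natCast_mul_geometric_le hγ0.le hγ1 T
    _ ≤ 2 * ε * (1 / (1 - γ) ^ 2) := by gcongr
    _ = 2 * ε / (1 - γ) ^ 2 := by ring

/-- if two Markov kernels differ by at most `ε` on every state and measurable
set, then for any measurable utility `u` bounded by 1 and any discount factor `γ ∈ (0,1)`,
the truncated discounted values computed under the two kernels differ by at most
`2ε/(1-γ)²`, uniformly in the truncation horizon `T`. -/
theorem truncated_value_kernel_lipschitz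
    {S : Type*} [MeasurableSpace S] (κ κ' : Kernel S S)
    [IsMarkovKernel κ] [IsMarkovKernel κ']
    (μ : Measure S) [IsProbabilityMeasure μ] (ε : ℝ) (hε : 0 ≤ ε)
    (hclose : ∀ s : S, ∀ A : Set S, MeasurableSet A →
      |(κ s A).toReal - (κ' s A).toReal| ≤ ε)
    (u : S → ℝ) (humeas : Measurable u) (hubdd : ∀ s, |u s| ≤ 1)
    (γ : ℝ) (hγ : γ ∈ Set.Ioo (0 : ℝ) 1) (T : ℕ) (hT : 0 < T) :
    |∑ t ∈ Finset.range T, γ ^ t *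
        ((∫ x, u x ∂(iterKernel κ t μ)) - ∫ x, u x ∂(iterKernel κ' t μ))|
      ≤ 2 * ε / (1 - γ) ^ 2 :=
  truncated_value_kernel_lipschitz_general κ κ' μ ε hε hclose u humeas hubdd γ hγ T
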